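/- Splitting the grid into two horizontal halves and concatenating an optimal ≤m-turn no-left-turn path on each half (where the second path starts at the column where the first one ends) yields a path whose total energy is at least the energy of an optimal ≤m-turn path on the whole grid restricted to m turns, i.e., OPT_split(m,m) ≥ OPT_whole(m). -/

import Mathlib

/-- The vertex reached after the first `k` steps of a monotone lattice path starting
at the origin, where `true` is a right step `(+1,0)` and `false` is an up step `(0,+1)`. -/
def pathPos (s : List Bool) (k : ℕ) : ℕ × ℕ :=
  ((s.take k).count true, (s.take k).count false)

/-- All vertices of the path lie in the `n × n` grid `{0, …, n-1}²`. -/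
def InGrid (n : ℕ) (s : List Bool) : Prop :=
  ∀ k ≤ s.length, (pathPos s k).1 < n ∧ (pathPos s k).2 < n

/-- The number of turns of the path: positions where consecutive steps differ. -/
def pathTurns (s : List Bool) : ℕ :=
  (s.zip s.tail).countP (fun q => q.1 != q.2)

/-- The energy collected by the path: sum of the weights of the vertices on its
vertical (up) runs, excluding each run's top endpoint, i.e. the vertices at the
bottom of each up step. -/
def pathEnergy (w : ℕ × ℕ → ℝ) (s : List Bool) : ℝ :=
  ∑ j ∈ Finset.range s.length, if s.getD j true = false then w (pathPos s j) else 0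

/-- The vertex reached after `k` steps of a path starting at vertex `v`. -/
def pathPosFrom (v : ℕ × ℕ) (s : List Bool) (k : ℕ) : ℕ × ℕ :=
  (v.1 + (pathPos s k).1, v.2 + (pathPos s k).2)

/-- All vertices of the path starting at `v` lie in the `n × n` grid. -/
def InGridFrom (n : ℕ) (v : ℕ × ℕ) (s : List Bool) : Prop :=
  ∀ k ≤ s.length, (pathPosFrom v s k).1 < n ∧ (pathPosFrom v s k).2 < n

/-- The energy of the path starting at `v`. -/
def pathEnergyFrom (w : ℕ × ℕ → ℝ) (v : ℕ × ℕ) (s : List Bool) : ℝ :=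
  ∑ j ∈ Finset.range s.length,
    if s.getD j true = false then w (pathPosFrom v s j) else 0


/-
Every admissible whole-grid path is itself a split path, so the first supremum ranges over
a subset of the second. Cut the path at a step where it is in row `⌊n/2⌋` (one exists,
since it climbs at most one row per step from row `0` to row `n - 1`). Both pieces stay in
the grid and have no more turns than the whole path, the second piece starts where the
first one ends, and energy is a sum over the steps, so it splits additively at the cut.
-/

lemma Nat.exists_le_eq_of_le_of_le_add_one {f : ℕ → ℕ} (h0 : f 0 = 0)
    (hstep : ∀ k, f (k + 1) ≤ f k + 1) {L t : ℕ} (ht : t ≤ f L) : ∃ k ≤ L, f k = t := by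
  induction L with
  | zero => exact ⟨0, le_rfl, by omega⟩
  | succ L ih =>
    by_cases h : t ≤ f L
    · obtain ⟨k, hk, hfk⟩ := ih h
      exact ⟨k, hk.trans L.le_succ, hfk⟩
    · exact ⟨L + 1, le_rfl, by have := hstep L; omega⟩

lemma pathTurns_cons_cons (x y : Bool) (l : List Bool) :
    pathTurns (x :: y :: l) = (if x != y then 1 else 0) + pathTurns (y :: l) := by
  simp [pathTurns, List.countP_cons, Nat.add_comm]

lemma pathTurns_le_pathTurns_cons (x : Bool) (l : List Bool) :
    pathTurns l ≤ pathTurns (x :: l) := by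
  cases l with
  | nil => simp [pathTurns]
  | cons y l => rw [pathTurns_cons_cons]; omega

lemma pathTurns_add_pathTurns_le_append (a b : List Bool) :
    pathTurns a + pathTurns b ≤ pathTurns (a ++ b) := by
  induction a with
  | nil => simp [pathTurns]
  | cons x a ih =>
    cases a with
    | nil => simpa [pathTurns] using pathTurns_le_pathTurns_cons x b
    | cons y a =>
      simp only [List.cons_append] at ih ⊢
      rw [pathTurns_cons_cons, pathTurns_cons_cons]
      omega

lemma pathTurns_take_le (s : List Bool) (k : ℕ) : pathTurns (s.take k) ≤ pathTurns s := by
  have := pathTurns_add_pathTurns_le_append (s.take k) (s.drop k)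
  rw [List.take_append_drop] at this
  omega

lemma pathTurns_drop_le (s : List Bool) (k : ℕ) : pathTurns (s.drop k) ≤ pathTurns s := by
  have := pathTurns_add_pathTurns_le_append (s.take k) (s.drop k)
  rw [List.take_append_drop] at this
  omega

lemma pathPos_take_of_le {j k : ℕ} (s : List Bool) (h : j ≤ k) :
    pathPos (s.take k) j = pathPos s j := by
  simp [pathPos, List.take_take, Nat.min_eq_left h]

lemma pathPosFrom_drop (s : List Bool) (k i : ℕ) :
    pathPosFrom (pathPos s k) (s.drop k) i = pathPos s (k + i) := by
  simp [pathPosFrom, pathPos, List.take_add, List.count_append]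

lemma pathPos_snd_succ_le (s : List Bool) (k : ℕ) :
    (pathPos s (k + 1)).2 ≤ (pathPos s k).2 + 1 := by
  simp only [pathPos, List.take_add_one, List.count_append]
  have : (s[k]?.toList).count false ≤ 1 :=
    (List.count_le_length ..).trans (by cases s[k]? <;> simp)
  omega

lemma InGrid.take {n : ℕ} {s : List Bool} (hs : InGrid n s) (k : ℕ) : InGrid n (s.take k) := by
  intro j hj
  rw [List.length_take] at hj
  rw [pathPos_take_of_le s (hj.trans (min_le_left ..))]
  exact hs j (hj.trans (min_le_right ..))

lemma InGrid.inGridFrom_drop {n k : ℕ} {s : List Bool} (hs : InGrid n s) (hk : k ≤ s.length) :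
    InGridFrom n (pathPos s k) (s.drop k) := by
  intro i hi
  rw [pathPosFrom_drop]
  exact hs (k + i) (by simp only [List.length_drop] at hi; omega)

lemma pathEnergy_eq_take_add_drop (w : ℕ × ℕ → ℝ) {s : List Bool} {k : ℕ}
    (hk : k ≤ s.length) :
    pathEnergy w s = pathEnergy w (s.take k) + pathEnergyFrom w (pathPos s k) (s.drop k) := by
  have hlen : s.length = k + (s.drop k).length := by simp; omega
  rw [pathEnergy, pathEnergy, pathEnergyFrom, hlen, Finset.sum_range_add,
    List.length_take_of_le hk]
  congr 1
  · refine Finset.sum_congr rfl fun j hj => ?_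
    have hj : j < k := Finset.mem_range.mp hj
    rw [pathPos_take_of_le s hj.le, List.getD_eq_getElem _ _ (by omega),
      List.getD_eq_getElem _ _ (by rwa [List.length_take_of_le hk]), List.getElem_take]
  · refine Finset.sum_congr rfl fun i hi => ?_
    have hi : i < (s.drop k).length := Finset.mem_range.mp hi
    rw [pathPosFrom_drop, List.getD_eq_getElem _ _ hi,
      List.getD_eq_getElem _ _ (by simp at hi; omega), List.getElem_drop]

theorem opt_whole_le_opt_split_general (n : ℕ) (w : ℕ × ℕ → ℝ) (m : ℕ) :
    sSup {e : EReal | ∃ s : List Bool, InGrid n s ∧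
        (pathPos s s.length).2 = n - 1 ∧ pathTurns s ≤ m ∧
        e = (pathEnergy w s : EReal)} ≤
      sSup {e : EReal | ∃ s₁ s₂ : List Bool,
        InGrid n s₁ ∧ pathTurns s₁ ≤ m ∧ (pathPos s₁ s₁.length).2 = n / 2 ∧
        InGridFrom n (pathPos s₁ s₁.length) s₂ ∧ pathTurns s₂ ≤ m ∧
        (pathPosFrom (pathPos s₁ s₁.length) s₂ s₂.length).2 = n - 1 ∧
        e = ((pathEnergy w s₁ + pathEnergyFrom w (pathPos s₁ s₁.length) s₂ : ℝ) : EReal)} := by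
  refine sSup_le_sSup ?_
  rintro e ⟨s, hgrid, hend, hturns, rfl⟩
  obtain ⟨k, hk, hrow⟩ := Nat.exists_le_eq_of_le_of_le_add_one (f := fun k => (pathPos s k).2)
    (by simp [pathPos]) (pathPos_snd_succ_le s) (t := n / 2) (by rw [hend]; omega)
  have hcut : pathPos (s.take k) (s.take k).length = pathPos s k := by
    rw [List.length_take_of_le hk, pathPos_take_of_le s le_rfl]
  refine ⟨s.take k, s.drop k, hgrid.take k, (pathTurns_take_le s k).trans hturns, ?_, ?_,
    (pathTurns_drop_le s k).trans hturns, ?_, ?_⟩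
  · rwa [hcut]
  · rw [hcut]; exact hgrid.inGridFrom_drop hk
  · rw [hcut, pathPosFrom_drop, List.length_drop, Nat.add_sub_cancel' hk, hend]
  · rw [hcut, ← pathEnergy_eq_take_add_drop w hk]

/-- Splitting the grid into two horizontal halves and concatenating an optimal
`≤ m`-turn no-left-turn path on each half (the second starting where the first
ends, in row `⌊n/2⌋`) collects at least as much energy as an optimal `≤ m`-turn
path on the whole grid: `OPT_split(m,m) ≥ OPT_whole(m)`. -/
theorem opt_whole_le_opt_split (n : ℕ) (hn : 0 < n) (w : ℕ × ℕ → ℝ)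
    (hw : ∀ v, 0 ≤ w v) (m : ℕ) :
    sSup {e : EReal | ∃ s : List Bool, InGrid n s ∧
        (pathPos s s.length).2 = n - 1 ∧ pathTurns s ≤ m ∧
        e = (pathEnergy w s : EReal)} ≤
      sSup {e : EReal | ∃ s₁ s₂ : List Bool,
        InGrid n s₁ ∧ pathTurns s₁ ≤ m ∧ (pathPos s₁ s₁.length).2 = n / 2 ∧
        InGridFrom n (pathPos s₁ s₁.length) s₂ ∧ pathTurns s₂ ≤ m ∧
        (pathPosFrom (pathPos s₁ s₁.length) s₂ s₂.length).2 = n - 1 ∧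
        e = ((pathEnergy w s₁ + pathEnergyFrom w (pathPos s₁ s₁.length) s₂ : ℝ) : EReal)} :=
  opt_whole_le_opt_split_general n w m
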